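/- For every natural number k ≥ 1, the group defined by the presentation ⟨d, t | dᵏ = 1, t²dtd⁻¹t⁻¹d = 1⟩ is finite of order 2k(1 + 4 + 4² + ⋯ + 4^{k−1}) = 2k(4ᵏ − 1)/3. -/

import Mathlib

/-- Relators for the presentation `⟨d, t | dᵏ, t²dtd⁻¹t⁻¹d⟩`,
with generators `d = 0`, `t = 1`. -/
def relsDT' (k : ℕ) : Set (FreeGroup (Fin 2)) :=
  let d : FreeGroup (Fin 2) := FreeGroup.of 0
  let t : FreeGroup (Fin 2) := FreeGroup.of 1
  {d ^ k, t ^ 2 * d * t * d⁻¹ * t⁻¹ * d}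

/-!
Put `e = d t²`. A word computation shows that the second relator says exactly `t e t⁻¹ = e²`,
so `tʲ eⁱ t⁻ʲ = e^(2ʲ i)` and, inductively, `t^(2j) dʲ = e^(4(1 + 4 + ⋯ + 4^(j-1)))`.
Write `m = 1 + 4 + ⋯ + 4^(k-1)`, so `3m + 1 = 4ᵏ`. From `dᵏ = 1` we get `t^(2k) = e^(4m)`;
since `t` commutes with its own power, `e^(8m) = e^(4m)`, hence `e^(4m) = 1 = t^(2k)`.
Conjugating `e` by `t^(2k) = 1` gives `e = e^(4ᵏ) = e^(3m+1)`, so `e^(3m) = 1` and `eᵐ = 1`.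
Thus `e` and `t` satisfy the relations of the metacyclic group `ℤ/m ⋊ ℤ/2k`, in which `t` acts
by multiplication by `2` (note `2^(2k) = 4ᵏ ≡ 1 mod m`); conversely `e t⁻²` and `t` satisfy the
given relators there, and the two resulting homomorphisms are mutually inverse.
-/

open Multiplicative

section ZModHom

variable {G : Type*} [Group G] {n : ℕ}

def zmodPowersHom (g : G) (hg : g ^ n = 1) : Multiplicative (ZMod n) →* G :=
  AddMonoidHom.toMultiplicativeLeft <|
    ZMod.lift n ⟨zmultiplesHom _ (Additive.ofMul g), by simp [← ofMul_pow, hg]⟩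

@[simp]
theorem zmodPowersHom_ofAdd_natCast (g : G) (hg : g ^ n = 1) (j : ℕ) :
    zmodPowersHom g hg (ofAdd (j : ZMod n)) = g ^ j := by
  have := ZMod.lift_coe n ⟨zmultiplesHom _ (Additive.ofMul g), by simp [← ofMul_pow, hg]⟩ j
  simpa [zmodPowersHom] using congrArg Additive.toMul this

theorem zmodPowersHom_ofAdd_one (g : G) (hg : g ^ n = 1) :
    zmodPowersHom g hg (ofAdd 1) = g := by
  simpa using zmodPowersHom_ofAdd_natCast g hg 1

theorem MonoidHom.ext_multiplicative_zmod {f f' : Multiplicative (ZMod n) →* G}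
    (h : f (ofAdd 1) = f' (ofAdd 1)) : f = f' := by
  refine MonoidHom.ext fun x => ?_
  obtain ⟨j, hj⟩ := ZMod.intCast_surjective (toAdd x)
  have hx : x = ofAdd 1 ^ j := by rw [← ofAdd_zsmul, zsmul_one, hj, ofAdd_toAdd]
  rw [hx, map_zpow, map_zpow, h]

end ZModHom

theorem pow_conj_pow_of_conj_eq_pow {G : Type*} [Group G] {e t : G} {r : ℕ}
    (h : t * e * t⁻¹ = e ^ r) (i j : ℕ) : t ^ i * e ^ j * (t ^ i)⁻¹ = e ^ (r ^ i * j) := by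
  induction i with
  | zero => simp
  | succ i ih =>
    calc t ^ (i + 1) * e ^ j * (t ^ (i + 1))⁻¹ = t * (t ^ i * e ^ j * (t ^ i)⁻¹) * t⁻¹ := by
          group
      _ = e ^ (r ^ (i + 1) * j) := by rw [ih, ← conj_pow, h, ← pow_mul, pow_succ', mul_assoc]

section Metacyclic

variable (m n : ℕ) [NeZero n] (r : ℕ) (hr : (r : ZMod m) ^ n = 1)

def metacyclicAction : Multiplicative (ZMod n) →* MulAut (Multiplicative (ZMod m)) :=
  (MulAutMultiplicative (ZMod m)).symm.toMonoidHom.comp <| AddAut.mulLeft.comp <|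
    zmodPowersHom (Units.ofPowEqOne _ n hr (NeZero.ne n)) (Units.pow_ofPowEqOne hr _)

theorem metacyclicAction_ofAdd_natCast (i : ℕ) (x : ZMod m) :
    metacyclicAction m n r hr (ofAdd (i : ZMod n)) (ofAdd x) = ofAdd ((r : ZMod m) ^ i * x) := by
  simp only [metacyclicAction, MonoidHom.comp_apply, zmodPowersHom_ofAdd_natCast]
  change ofAdd (((Units.ofPowEqOne _ n hr _ ^ i : (ZMod m)ˣ) : ZMod m) * x) = _
  simp

/-- The metacyclic group `⟨a, b | aᵐ = bⁿ = 1, b a b⁻¹ = aʳ⟩`. -/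
abbrev Metacyclic : Type :=
  Multiplicative (ZMod m) ⋊[metacyclicAction m n r hr] Multiplicative (ZMod n)

namespace Metacyclic

theorem card : Nat.card (Metacyclic m n r hr) = m * n := by
  rw [SemidirectProduct.card]
  exact congrArg₂ (· * ·) (Nat.card_zmod m) (Nat.card_zmod n)

variable {m n r hr}

def a : Metacyclic m n r hr := SemidirectProduct.inl (ofAdd 1)

def b : Metacyclic m n r hr := SemidirectProduct.inr (ofAdd 1)

theorem a_pow : (a : Metacyclic m n r hr) ^ m = 1 := by
  simp [a, ← map_pow, ← ofAdd_nsmul]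

theorem b_pow : (b : Metacyclic m n r hr) ^ n = 1 := by
  simp [b, ← map_pow, ← ofAdd_nsmul]

theorem b_mul_a_mul_b_inv : (b : Metacyclic m n r hr) * a * b⁻¹ = a ^ r := by
  have h := metacyclicAction_ofAdd_natCast m n r hr 1 1
  rw [Nat.cast_one, pow_one, mul_one] at h
  rw [a, b, ← map_inv, ← SemidirectProduct.inl_aut, h, ← map_pow, ← ofAdd_nsmul, nsmul_one]

theorem hom_ext {H : Type*} [Group H] {f f' : Metacyclic m n r hr →* H} (ha : f a = f' a)
    (hb : f b = f' b) : f = f' :=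
  SemidirectProduct.hom_ext (MonoidHom.ext_multiplicative_zmod ha)
    (MonoidHom.ext_multiplicative_zmod hb)

variable {H : Type*} [Group H] {e t : H}

def lift (he : e ^ m = 1) (ht : t ^ n = 1) (hte : t * e * t⁻¹ = e ^ r) :
    Metacyclic m n r hr →* H :=
  SemidirectProduct.lift (zmodPowersHom e he) (zmodPowersHom t ht) fun g ↦ by
    refine MonoidHom.ext_multiplicative_zmod ?_
    obtain ⟨i, rfl⟩ : ∃ i : ℕ, g = ofAdd (i : ZMod n) := ⟨(toAdd g).val, by simp⟩
    change zmodPowersHom e he (metacyclicAction m n r hr (ofAdd (i : ZMod n)) (ofAdd 1)) =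
      MulAut.conj (zmodPowersHom t ht (ofAdd (i : ZMod n))) (zmodPowersHom e he (ofAdd 1))
    rw [metacyclicAction_ofAdd_natCast, mul_one, ← Nat.cast_pow, zmodPowersHom_ofAdd_natCast,
      zmodPowersHom_ofAdd_natCast, zmodPowersHom_ofAdd_one, MulAut.conj_apply]
    simpa using (pow_conj_pow_of_conj_eq_pow hte i 1).symm

variable (he : e ^ m = 1) (ht : t ^ n = 1) (hte : t * e * t⁻¹ = e ^ r)

@[simp]
theorem lift_a : lift (hr := hr) he ht hte a = e := by
  simp [lift, a, zmodPowersHom_ofAdd_one]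

@[simp]
theorem lift_b : lift (hr := hr) he ht hte b = t := by
  simp [lift, b, zmodPowersHom_ofAdd_one]

end Metacyclic

end Metacyclic

section RelsDT'

variable {G : Type*} [Group G] {d e t : G}

theorem conj_mul_sq_eq_sq_iff :
    t * (d * t ^ 2) * t⁻¹ = (d * t ^ 2) ^ 2 ↔ t ^ 2 * d * t * d⁻¹ * t⁻¹ * d = 1 := by
  have key : (d * t ^ 2) ^ 2 * (t * (d * t ^ 2) * t⁻¹)⁻¹ =
      d * (t ^ 2 * d * t * d⁻¹ * t⁻¹ * d) * d⁻¹ := by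
    rw [sq (d * t ^ 2)]
    group
  rw [eq_comm, ← mul_inv_eq_one, key, conj_eq_one_iff]

theorem pow_mul_pow_of_conj_eq_sq (hte : t * e * t⁻¹ = e ^ 2) (j : ℕ) :
    t ^ (2 * j) * (e * (t ^ 2)⁻¹) ^ j = e ^ (4 * ∑ i ∈ Finset.range j, 4 ^ i) := by
  have h4 : t ^ 2 * e * (t ^ 2)⁻¹ = e ^ 4 := by
    simpa using pow_conj_pow_of_conj_eq_pow hte 2 1
  induction j with
  | zero => simp
  | succ j ih =>
    calc t ^ (2 * (j + 1)) * (e * (t ^ 2)⁻¹) ^ (j + 1)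
        = t ^ (2 * j) * (t ^ 2 * e * (t ^ 2)⁻¹) * (t ^ (2 * j))⁻¹ *
            (t ^ (2 * j) * (e * (t ^ 2)⁻¹) ^ j) := by
          rw [pow_succ' (e * (t ^ 2)⁻¹) j, mul_add, mul_one, pow_add]
          generalize (e * (t ^ 2)⁻¹) ^ j = x
          group
      _ = e ^ (2 ^ (2 * j) * 4) * e ^ (4 * ∑ i ∈ Finset.range j, 4 ^ i) := by
          rw [h4, ih, pow_conj_pow_of_conj_eq_pow hte]
      _ = e ^ (4 * ∑ i ∈ Finset.range (j + 1), 4 ^ i) := by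
          rw [← pow_add, Finset.sum_range_succ, pow_mul]
          ring_nf

theorem pow_eq_one_of_pow_eq_of_conj_eq_sq (hte : t * e * t⁻¹ = e ^ 2) {n a : ℕ}
    (h : t ^ n = e ^ a) : e ^ a = 1 := by
  have h2 : e ^ a * e ^ a = e ^ a := by
    calc e ^ a * e ^ a = t ^ 1 * e ^ a * (t ^ 1)⁻¹ := by
          rw [pow_conj_pow_of_conj_eq_pow hte, ← pow_add]
          ring_nf
      _ = e ^ a := by rw [← h, pow_one, (Commute.self_pow t n).eq, mul_inv_cancel_right]
  exact mul_eq_right.mp h2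

theorem three_mul_sum_range_four_pow_add_one (k : ℕ) :
    3 * ∑ i ∈ Finset.range k, 4 ^ i + 1 = 4 ^ k := by
  have h := geom_sum_mul_add 3 k
  norm_num at h
  linarith

theorem pow_eq_one_of_relsDT' {k : ℕ} (hd : d ^ k = 1)
    (hrel : t ^ 2 * d * t * d⁻¹ * t⁻¹ * d = 1) :
    (d * t ^ 2) ^ (∑ i ∈ Finset.range k, 4 ^ i) = 1 ∧ t ^ (2 * k) = 1 := by
  set e := d * t ^ 2
  set s := ∑ i ∈ Finset.range k, 4 ^ i
  have hte : t * e * t⁻¹ = e ^ 2 := conj_mul_sq_eq_sq_iff.mpr hrel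
  have ht_eq : t ^ (2 * k) = e ^ (4 * s) := by
    simpa [e, hd] using pow_mul_pow_of_conj_eq_sq hte k
  have he4 : e ^ (4 * s) = 1 := pow_eq_one_of_pow_eq_of_conj_eq_sq hte ht_eq
  have ht : t ^ (2 * k) = 1 := ht_eq.trans he4
  have he3 : e ^ (3 * s) = 1 := by
    have h := pow_conj_pow_of_conj_eq_pow hte (2 * k) 1
    rw [ht, one_mul, inv_one, pow_one, mul_one, mul_one, pow_mul, show (2 : ℕ) ^ 2 = 4 from rfl,
      ← three_mul_sum_range_four_pow_add_one, pow_succ] at h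
    exact mul_eq_right.mp h.symm
  refine ⟨?_, ht⟩
  rwa [show 4 * s = 3 * s + s by ring, pow_add, he3, one_mul] at he4

theorem lift_eq_one_of_mem_relsDT' {k : ℕ} (he : e ^ (∑ i ∈ Finset.range k, 4 ^ i) = 1)
    (ht : t ^ (2 * k) = 1) (hte : t * e * t⁻¹ = e ^ 2) :
    ∀ r ∈ relsDT' k, FreeGroup.lift ![e * (t ^ 2)⁻¹, t] r = 1 := by
  have hte' : t * (e * (t ^ 2)⁻¹ * t ^ 2) * t⁻¹ = (e * (t ^ 2)⁻¹ * t ^ 2) ^ 2 := by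
    rwa [inv_mul_cancel_right]
  rintro r (rfl | rfl)
  · have h := pow_mul_pow_of_conj_eq_sq hte k
    rw [ht, one_mul, mul_comm, pow_mul, he, one_pow] at h
    simpa using h
  · simpa using conj_mul_sq_eq_sq_iff.mp hte'

end RelsDT'

theorem natCast_two_pow_two_mul_eq_one (k : ℕ) :
    ((2 : ℕ) : ZMod (∑ i ∈ Finset.range k, 4 ^ i)) ^ (2 * k) = 1 := by
  rw [← Nat.cast_pow, pow_mul, show 2 ^ 2 = 4 from rfl, ← three_mul_sum_range_four_pow_add_one]
  simp

open PresentedGroup in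
theorem presentedGroup_relsDT'_relators_eq_one (k : ℕ) :
    (of 0 : PresentedGroup (relsDT' k)) ^ k = 1 ∧
      of 1 ^ 2 * of 0 * of 1 * (of 0)⁻¹ * (of 1)⁻¹ * (of 0 : PresentedGroup (relsDT' k)) = 1 :=
  ⟨one_of_mem (by simp [relsDT']), one_of_mem (by simp [relsDT'])⟩

open PresentedGroup in
def presentedGroupRelsDT'MulEquiv (k : ℕ) [NeZero k] :
    PresentedGroup (relsDT' k) ≃*
      Metacyclic (∑ i ∈ Finset.range k, 4 ^ i) (2 * k) 2 (natCast_two_pow_two_mul_eq_one k) :=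
  have hrel := presentedGroup_relsDT'_relators_eq_one k
  have hP := pow_eq_one_of_relsDT' hrel.1 hrel.2
  MonoidHom.toMulEquiv
    (toGroup (lift_eq_one_of_mem_relsDT' Metacyclic.a_pow Metacyclic.b_pow
      Metacyclic.b_mul_a_mul_b_inv))
    (Metacyclic.lift hP.1 hP.2 (conj_mul_sq_eq_sq_iff.mpr hrel.2))
    (PresentedGroup.ext fun i => by fin_cases i <;> simp [toGroup.of])
    (Metacyclic.hom_ext (by simp [toGroup.of]) (by simp [toGroup.of]))

theorem card_presentedGroup_relsDT' (k : ℕ) (hk : 1 ≤ k) :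
    Finite (PresentedGroup (relsDT' k)) ∧
      Nat.card (PresentedGroup (relsDT' k)) =
        2 * k * ∑ i ∈ Finset.range k, 4 ^ i := by
  have : NeZero k := ⟨by omega⟩
  have hcard : Nat.card (PresentedGroup (relsDT' k)) = 2 * k * ∑ i ∈ Finset.range k, 4 ^ i := by
    rw [Nat.card_congr (presentedGroupRelsDT'MulEquiv k).toEquiv, Metacyclic.card, mul_comm]
  have hs : 0 < ∑ i ∈ Finset.range k, 4 ^ i :=
    Finset.sum_pos (fun _ _ => by positivity) (Finset.nonempty_range_iff.mpr (NeZero.ne k))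
  exact ⟨Nat.finite_of_card_ne_zero (by rw [hcard]; exact (Nat.mul_pos (by omega) hs).ne'), hcard⟩
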